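/- arXiv:2011.05635 — 5 statements merged into one kernel-verified Lean document; each statement's English description precedes it below -/
import Mathlib

section
/- Let a, b be real numbers with b ≠ 0, and define F(ξ) = (3a²/(2b)) (1 + tanh(aξ/2))². Then F satisfies the second-order ODE F''(ξ) = b F(ξ)² − 6a² F(ξ) + 5a F'(ξ) for all ξ ∈ ℝ. -/
/-! With `t = tanh (k ξ)` one has `t' = k (1 - t²)`, so every derivative of `C (1 + t)²` is a
polynomial in `t`: `F' = 2Ck (1 + t)² (1 - t)` and `F'' = 2Ck² (1 + t)² (1 - t) (1 - 3t)`.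
For `k = a / 2` and `C = 3a² / (2b)` the ODE becomes a polynomial identity in `t`, once
`b C² = (3a² / 2) C` is used. -/

open Real

theorem Real.hasDerivAt_tanh (x : ℝ) : HasDerivAt tanh (1 - tanh x ^ 2) x := by
  have hquot := (hasDerivAt_sinh x).div (hasDerivAt_cosh x) (cosh_pos x).ne'
  rw [show tanh = sinh / cosh from funext tanh_eq_sinh_div_cosh]
  refine hquot.congr_deriv ?_
  rw [Pi.div_apply]
  field_simp

theorem hasDerivAt_tanh_const_mul (k x : ℝ) :
    HasDerivAt (fun y => tanh (k * y)) (k * (1 - tanh (k * x) ^ 2)) x := by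
  refine ((Real.hasDerivAt_tanh (k * x)).comp x ((hasDerivAt_id' x).const_mul k)).congr_deriv ?_
  ring

theorem hasDerivAt_const_mul_one_add_tanh_sq (C k x : ℝ) :
    HasDerivAt (fun y => C * (1 + tanh (k * y)) ^ 2)
      (2 * C * k * (1 + tanh (k * x)) ^ 2 * (1 - tanh (k * x))) x := by
  refine ((((hasDerivAt_tanh_const_mul k x).const_add 1).pow 2).const_mul C).congr_deriv ?_
  push_cast
  ring

theorem deriv_const_mul_one_add_tanh_sq (C k : ℝ) :
    deriv (fun y => C * (1 + tanh (k * y)) ^ 2) =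
      fun x => 2 * C * k * (1 + tanh (k * x)) ^ 2 * (1 - tanh (k * x)) :=
  funext fun x => (hasDerivAt_const_mul_one_add_tanh_sq C k x).deriv

theorem hasDerivAt_deriv_const_mul_one_add_tanh_sq (C k x : ℝ) :
    HasDerivAt (deriv fun y => C * (1 + tanh (k * y)) ^ 2)
      (2 * C * k ^ 2 * (1 + tanh (k * x)) ^ 2 * (1 - tanh (k * x)) * (1 - 3 * tanh (k * x))) x := by
  rw [deriv_const_mul_one_add_tanh_sq]
  have ht := hasDerivAt_tanh_const_mul k x
  refine ((((ht.const_add 1).pow 2).const_mul (2 * C * k)).mul (ht.const_sub 1)).congr_deriv ?_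
  simp only [Pi.pow_apply]
  push_cast
  ring

theorem mul_div_sq_eq_mul_div (c b : ℝ) : b * (c / b) ^ 2 = c * (c / b) := by
  rcases eq_or_ne b 0 with rfl | hb
  · simp
  · field_simp

theorem aux_ode_tanh_solution_general
    (a b : ℝ) (F : ℝ → ℝ)
    (hF : ∀ ξ, F ξ = 3 * a ^ 2 / (2 * b) * (1 + Real.tanh (a * ξ / 2)) ^ 2)
    (ξ : ℝ) :
    deriv (deriv F) ξ = b * F ξ ^ 2 - 6 * a ^ 2 * F ξ + 5 * a * deriv F ξ := by
  set C := 3 * a ^ 2 / (2 * b)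
  have hFfun : F = fun y => C * (1 + tanh (a / 2 * y)) ^ 2 :=
    funext fun y => by rw [hF, mul_div_right_comm]
  have hbC : b * C ^ 2 = 3 * a ^ 2 / 2 * C := by
    rw [show C = 3 * a ^ 2 / 2 / b by ring]
    exact mul_div_sq_eq_mul_div _ _
  rw [hFfun, (hasDerivAt_deriv_const_mul_one_add_tanh_sq C (a / 2) ξ).deriv,
    deriv_const_mul_one_add_tanh_sq]
  linear_combination (-(1 + tanh (a / 2 * ξ)) ^ 4) * hbC

theorem aux_ode_tanh_solution
    (a b : ℝ) (hb : b ≠ 0) (F : ℝ → ℝ)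
    (hF : ∀ ξ, F ξ = 3 * a ^ 2 / (2 * b) * (1 + Real.tanh (a * ξ / 2)) ^ 2)
    (ξ : ℝ) :
    deriv (deriv F) ξ = b * F ξ ^ 2 - 6 * a ^ 2 * F ξ + 5 * a * deriv F ξ :=
  aux_ode_tanh_solution_general a b F hF ξ
end

section
/- Let a, b be real numbers with b ≠ 0, and define F(ξ) = (3a²/(2b)) (1 + coth(aξ/2))² for ξ with aξ ≠ 0. Then F satisfies F''(ξ) = b F(ξ)² − 6a² F(ξ) + 5a F'(ξ) at every point ξ with sinh(aξ/2) ≠ 0. -/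
/-- The real hyperbolic cotangent. -/
noncomputable def coth (x : ℝ) : ℝ := Real.cosh x / Real.sinh x

/-!
With `t = coth (a ξ / 2)` the Riccati equation `t' = (a / 2) (1 - t²)` makes every derivative of
`F = c (1 + t)²` a polynomial in `t`: `F' = c a (1 + t)² (1 - t)` and
`F'' = c (a² / 2) (1 + t)² (1 - t) (1 - 3 t)`. For `c = 3 a² / (2 b)` the equation becomes a
polynomial identity in `t`.
-/

open Real

theorem hasDerivAt_coth {x : ℝ} (hx : sinh x ≠ 0) : HasDerivAt coth (1 - coth x ^ 2) x := by
  refine ((hasDerivAt_cosh x).div (hasDerivAt_sinh x) hx).congr_deriv ?_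
  rw [coth, div_pow]
  field_simp

theorem hasDerivAt_coth_mul_div_two (a : ℝ) {x : ℝ} (hx : sinh (a * x / 2) ≠ 0) :
    HasDerivAt (fun y => coth (a * y / 2)) (a / 2 * (1 - coth (a * x / 2) ^ 2)) x := by
  have hlin : HasDerivAt (fun y : ℝ => a * y / 2) (a / 2) x := by
    simpa using ((hasDerivAt_id x).const_mul a).div_const 2
  exact ((hasDerivAt_coth hx).comp x hlin).congr_deriv (mul_comm _ _)

theorem hasDerivAt_coth_profile (a c : ℝ) {x : ℝ} (hx : sinh (a * x / 2) ≠ 0) :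
    HasDerivAt (fun y => c * (1 + coth (a * y / 2)) ^ 2)
      (c * a * (1 + coth (a * x / 2)) ^ 2 * (1 - coth (a * x / 2))) x := by
  refine (((hasDerivAt_coth_mul_div_two a hx).const_add 1).fun_pow 2 |>.const_mul c).congr_deriv ?_
  ring

theorem hasDerivAt_coth_profile_deriv (a c : ℝ) {x : ℝ} (hx : sinh (a * x / 2) ≠ 0) :
    HasDerivAt (fun y => c * a * (1 + coth (a * y / 2)) ^ 2 * (1 - coth (a * y / 2)))
      (c * (a ^ 2 / 2) * (1 + coth (a * x / 2)) ^ 2 * (1 - coth (a * x / 2)) *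
        (1 - 3 * coth (a * x / 2))) x := by
  have ht := hasDerivAt_coth_mul_div_two a hx
  refine ((((ht.const_add 1).fun_pow 2).const_mul (c * a)).mul (ht.const_sub 1)).congr_deriv ?_
  ring

theorem deriv_deriv_coth_profile (a c : ℝ) {x : ℝ} (hx : sinh (a * x / 2) ≠ 0) :
    deriv (deriv fun y => c * (1 + coth (a * y / 2)) ^ 2) x =
      c * (a ^ 2 / 2) * (1 + coth (a * x / 2)) ^ 2 * (1 - coth (a * x / 2)) *
        (1 - 3 * coth (a * x / 2)) := by
  have hopen : IsOpen {y : ℝ | sinh (a * y / 2) ≠ 0} :=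
    isOpen_ne.preimage (by fun_prop)
  have hderiv : deriv (fun y => c * (1 + coth (a * y / 2)) ^ 2) =ᶠ[nhds x]
      fun y => c * a * (1 + coth (a * y / 2)) ^ 2 * (1 - coth (a * y / 2)) := by
    filter_upwards [hopen.mem_nhds hx] with y hy
    exact (hasDerivAt_coth_profile a c hy).deriv
  rw [hderiv.deriv_eq, (hasDerivAt_coth_profile_deriv a c hx).deriv]

theorem aux_ode_coth_solution
    (a b : ℝ) (hb : b ≠ 0) (F : ℝ → ℝ)
    (hF : ∀ ξ, F ξ = 3 * a ^ 2 / (2 * b) * (1 + coth (a * ξ / 2)) ^ 2)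
    (ξ : ℝ) (hξ : Real.sinh (a * ξ / 2) ≠ 0) :
    deriv (deriv F) ξ = b * F ξ ^ 2 - 6 * a ^ 2 * F ξ + 5 * a * deriv F ξ := by
  obtain rfl : F = fun ξ => 3 * a ^ 2 / (2 * b) * (1 + coth (a * ξ / 2)) ^ 2 := funext hF
  rw [deriv_deriv_coth_profile a _ hξ, (hasDerivAt_coth_profile a _ hξ).deriv]
  field_simp
  ring
end

section
/- Let a ∈ ℝ, ε = ±1, and define F(ξ) = (εa/2)(1 − tanh(aξ/2)). Then F satisfies the second-order ODE F''(ξ) = 2 F(ξ)³ − 2a² F(ξ) − 3a F'(ξ) for all ξ ∈ ℝ. -/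
/-! With `t = tanh (a ξ / 2)` and `tanh' = 1 - tanh²`, one finds `F' = -(ε a² / 4) (1 - t²)` and
`F'' = (ε a³ / 4) t (1 - t²)`; the ODE then becomes a polynomial identity in `t`, valid once
`ε³ = ε`. -/

open Real

theorem HasDerivAt.tanh {f : ℝ → ℝ} {f' x : ℝ} (hf : HasDerivAt f f' x) :
    HasDerivAt (fun y => Real.tanh (f y)) ((1 - Real.tanh (f x) ^ 2) * f') x :=
  (Real.hasDerivAt_tanh (f x)).comp x hf

theorem aux_ode2_tanh_solution
    (a ε : ℝ) (hε : ε = 1 ∨ ε = -1) (F : ℝ → ℝ)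
    (hF : ∀ ξ, F ξ = ε * a / 2 * (1 - Real.tanh (a * ξ / 2)))
    (ξ : ℝ) :
    deriv (deriv F) ξ = 2 * F ξ ^ 3 - 2 * a ^ 2 * F ξ - 3 * a * deriv F ξ := by
  have harg (x : ℝ) : HasDerivAt (fun y => a * y / 2) (a / 2) x := by
    simpa using ((hasDerivAt_id x).const_mul a).div_const 2
  have hF' : deriv F = fun x => -(ε * a ^ 2 / 4) * (1 - tanh (a * x / 2) ^ 2) := by
    funext x
    rw [show F = _ from funext hF]
    refine (((hasDerivAt_const x 1).sub (harg x).tanh).const_mul (ε * a / 2)).deriv.trans ?_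
    ring
  have hF'' :
      deriv (deriv F) ξ = ε * a ^ 3 / 4 * tanh (a * ξ / 2) * (1 - tanh (a * ξ / 2) ^ 2) := by
    rw [hF']
    refine ((((hasDerivAt_const ξ 1).sub ((harg ξ).tanh.pow 2)).const_mul
      (-(ε * a ^ 2 / 4))).deriv).trans ?_
    ring
  have hε_sq : ε ^ 2 = 1 := by rcases hε with rfl | rfl <;> norm_num
  rw [hF'', hF ξ, hF']
  linear_combination (-(ε * a ^ 3 / 4) * (1 - tanh (a * ξ / 2)) ^ 3) * hε_sq
end

section
/- Suppose a₀, a₁, a, b, ω, λ, μ, ν are real numbers with a₁ ≠ 0, ν ≠ 0, λ ≠ 0, b ≠ 0 satisfying the system: 2bνa₁ + λa₁² = 0, −30a³νa₁ − 6a²μa₁ = 0, 5abνa₁ + bμa₁ = 0, and 19a²νa₁ + 5aμa₁ + λa₀a₁ + ωa₁ = 0. Then a = −μ/(5ν), a₁ = −2bν/λ, and a₀ = (6μ² − 25ων)/(25λν). -/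
/-! Each equation of the system is divisible by `a₁`, the first and third also by `b`. What
remains is linear in `a`, `a₁` and `a₀` respectively: `5νa + μ = 0`, `2bν + λa₁ = 0` and
`19νa² + 5μa + λa₀ + ω = 0`, the last one solved after substituting `a = -μ/(5ν)`. -/

theorem solution_of_factored_kdv_burgers_system {K : Type*} [Field K] [CharZero K]
    {a₀ a₁ a b ω lam mu nu : K} (hnu : nu ≠ 0) (hlam : lam ≠ 0)
    (ha : 5 * a * nu + mu = 0) (ha₁ : 2 * b * nu + lam * a₁ = 0)
    (ha₀ : 19 * a ^ 2 * nu + 5 * a * mu + lam * a₀ + ω = 0) :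
    a = -mu / (5 * nu) ∧ a₁ = -2 * b * nu / lam ∧
      a₀ = (6 * mu ^ 2 - 25 * ω * nu) / (25 * lam * nu) := by
  refine ⟨?_, ?_, ?_⟩
  · rw [eq_div_iff (by simpa using hnu)]
    linear_combination ha
  · rw [eq_div_iff hlam]
    linear_combination ha₁
  · rw [eq_div_iff (by simp [hlam, hnu])]
    linear_combination 25 * nu * ha₀ - (6 * mu + 95 * a * nu) * ha

theorem kdv_burgers_algebraic_system_general
    (a₀ a₁ a b ω lam mu nu : ℝ)
    (ha₁ : a₁ ≠ 0) (hnu : nu ≠ 0) (hlam : lam ≠ 0) (hb : b ≠ 0)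
    (h1 : 2 * b * nu * a₁ + lam * a₁ ^ 2 = 0)
    (h3 : 5 * a * b * nu * a₁ + b * mu * a₁ = 0)
    (h4 : 19 * a ^ 2 * nu * a₁ + 5 * a * mu * a₁ + lam * a₀ * a₁ + ω * a₁ = 0) :
    a = -mu / (5 * nu) ∧ a₁ = -2 * b * nu / lam ∧
      a₀ = (6 * mu ^ 2 - 25 * ω * nu) / (25 * lam * nu) := by
  have ha : 5 * a * nu + mu = 0 :=
    (mul_eq_zero_iff_right (mul_ne_zero hb ha₁)).mp (by linear_combination h3)
  have hlin₁ : 2 * b * nu + lam * a₁ = 0 :=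
    (mul_eq_zero_iff_right ha₁).mp (by linear_combination h1)
  have hlin₀ : 19 * a ^ 2 * nu + 5 * a * mu + lam * a₀ + ω = 0 :=
    (mul_eq_zero_iff_right ha₁).mp (by linear_combination h4)
  exact solution_of_factored_kdv_burgers_system hnu hlam ha hlin₁ hlin₀

theorem kdv_burgers_algebraic_system
    (a₀ a₁ a b ω lam mu nu : ℝ)
    (ha₁ : a₁ ≠ 0) (hnu : nu ≠ 0) (hlam : lam ≠ 0) (hb : b ≠ 0)
    (h1 : 2 * b * nu * a₁ + lam * a₁ ^ 2 = 0)
    (h2 : -30 * a ^ 3 * nu * a₁ - 6 * a ^ 2 * mu * a₁ = 0)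
    (h3 : 5 * a * b * nu * a₁ + b * mu * a₁ = 0)
    (h4 : 19 * a ^ 2 * nu * a₁ + 5 * a * mu * a₁ + lam * a₀ * a₁ + ω * a₁ = 0) :
    a = -mu / (5 * nu) ∧ a₁ = -2 * b * nu / lam ∧
      a₀ = (6 * mu ^ 2 - 25 * ω * nu) / (25 * lam * nu) :=
  kdv_burgers_algebraic_system_general a₀ a₁ a b ω lam mu nu ha₁ hnu hlam hb h1 h3 h4
end

section
/- Let a ≠ 0 and b ≠ 0 be real numbers, and let F₁(ξ) = (3a²/(2b))(1 + tanh(aξ/2))² and F₂(ξ) = (3a²/(2b))(1 + coth(aξ/2))². Then both F₁ and F₂ satisfy the same ODE F'' = bF² − 6a²F + 5aF', and F₂(ξ) > F₁(ξ) for all ξ with aξ > 0 when b > 0. -/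
open Real

lemma tanh_hasDerivAt (x : ℝ) : HasDerivAt Real.tanh (1 - Real.tanh x ^ 2) x := by
  have h : Real.tanh = fun y => Real.sinh y / Real.cosh y :=
    funext fun y => Real.tanh_eq_sinh_div_cosh y
  have hd : HasDerivAt (fun y => Real.sinh y / Real.cosh y) _ x := (Real.hasDerivAt_sinh x).div (Real.hasDerivAt_cosh x) (Real.cosh_pos x).ne'
  rw [h]
  convert hd using 1
  beta_reduce
  have h2 := Real.cosh_sq_sub_sinh_sq x
  field_simp [(Real.cosh_pos x).ne']

lemma coth_hasDerivAt {x : ℝ} (hx : Real.sinh x ≠ 0) :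
    HasDerivAt coth (1 - coth x ^ 2) x := by
  have hd : HasDerivAt (fun y => Real.cosh y / Real.sinh y) _ x := (Real.hasDerivAt_cosh x).div (Real.hasDerivAt_sinh x) hx
  refine hd.congr_deriv ?_
  rw [coth]
  have h2 := Real.cosh_sq_sub_sinh_sq x
  field_simp

lemma inner_hasDerivAt (a ξ : ℝ) : HasDerivAt (fun ξ : ℝ => a * ξ / 2) (a / 2) ξ := by
  simpa using ((hasDerivAt_id ξ).const_mul a).div_const 2

theorem tanh_coth_solutions_same_ode_and_comparison
    (a b : ℝ) (ha : a ≠ 0) (hb : b ≠ 0) (F₁ F₂ : ℝ → ℝ)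
    (hF₁ : ∀ ξ, F₁ ξ = 3 * a ^ 2 / (2 * b) * (1 + Real.tanh (a * ξ / 2)) ^ 2)
    (hF₂ : ∀ ξ, F₂ ξ = 3 * a ^ 2 / (2 * b) * (1 + coth (a * ξ / 2)) ^ 2) :
    (∀ ξ : ℝ, deriv (deriv F₁) ξ
        = b * F₁ ξ ^ 2 - 6 * a ^ 2 * F₁ ξ + 5 * a * deriv F₁ ξ) ∧
    (∀ ξ : ℝ, Real.sinh (a * ξ / 2) ≠ 0 →
      deriv (deriv F₂) ξ
        = b * F₂ ξ ^ 2 - 6 * a ^ 2 * F₂ ξ + 5 * a * deriv F₂ ξ) ∧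
    (0 < b → ∀ ξ : ℝ, 0 < a * ξ → F₁ ξ < F₂ ξ) := by
  set C := 3 * a ^ 2 / (2 * b) with hC
  -- first derivatives
  have hD1 : ∀ ξ : ℝ, HasDerivAt F₁
      (C * (2 * (1 + Real.tanh (a * ξ / 2)) *
        ((1 - Real.tanh (a * ξ / 2) ^ 2) * (a / 2)))) ξ := by
    intro ξ
    have h : HasDerivAt _ _ ξ := ((((tanh_hasDerivAt (a * ξ / 2)).comp ξ (inner_hasDerivAt a ξ)).const_add
      1).pow 2).const_mul C
    rw [funext hF₁]
    refine h.congr_deriv ?_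
    simp only [Function.comp_def]
    push_cast
    ring
  have hDF₁ : deriv F₁ = fun ξ : ℝ =>
      C * (2 * (1 + Real.tanh (a * ξ / 2)) *
        ((1 - Real.tanh (a * ξ / 2) ^ 2) * (a / 2))) :=
    funext fun ξ => (hD1 ξ).deriv
  have hD2 : ∀ ξ : ℝ, HasDerivAt (deriv F₁)
      (C * (2 * ((1 - Real.tanh (a * ξ / 2) ^ 2) * (a / 2)) *
          ((1 - Real.tanh (a * ξ / 2) ^ 2) * (a / 2))
        + 2 * (1 + Real.tanh (a * ξ / 2)) *
          ((-(2 * Real.tanh (a * ξ / 2) * ((1 - Real.tanh (a * ξ / 2) ^ 2) * (a / 2)))) * (a / 2)))) ξ := by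
    intro ξ
    have ht := (tanh_hasDerivAt (a * ξ / 2)).comp ξ (inner_hasDerivAt a ξ)
    have h1 : HasDerivAt (fun ξ : ℝ => 2 * (1 + Real.tanh (a * ξ / 2)))
        (2 * ((1 - Real.tanh (a * ξ / 2) ^ 2) * (a / 2))) ξ := by
      simpa using (ht.const_add 1).const_mul 2
    have h2 : HasDerivAt (fun ξ : ℝ => (1 - Real.tanh (a * ξ / 2) ^ 2) * (a / 2))
        ((-(2 * Real.tanh (a * ξ / 2) * ((1 - Real.tanh (a * ξ / 2) ^ 2) * (a / 2)))) * (a / 2)) ξ := by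
      have : HasDerivAt _ _ ξ := ((ht.pow 2).const_sub 1).mul_const (a / 2)
      refine this.congr_deriv ?_
      simp only [Function.comp_def]
      push_cast
      ring
    have : HasDerivAt _ _ ξ := ((h1.mul h2).const_mul C)
    rw [hDF₁]
    exact this
  refine ⟨?_, ?_, ?_⟩
  · intro ξ
    rw [(hD2 ξ).deriv, hF₁ ξ, (hD1 ξ).deriv, hC]
    field_simp
    ring
  · intro ξ hs
    have hξ : ξ ≠ 0 := by
      intro h; apply hs; rw [h]; simp
    -- eventual equality for deriv F₂
    have hev : ∀ᶠ y in nhds ξ, y ≠ 0 := eventually_ne_nhds hξ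
    have hD1' : ∀ y : ℝ, y ≠ 0 → HasDerivAt F₂
        (C * (2 * (1 + coth (a * y / 2)) *
          ((1 - coth (a * y / 2) ^ 2) * (a / 2)))) y := by
      intro y hy
      have hsy : Real.sinh (a * y / 2) ≠ 0 := by
        rw [Real.sinh_ne_zero]
        intro h
        apply hy
        have h' : a * y = 0 := by linarith
        rcases mul_eq_zero.mp h' with h'' | h''
        exacts [absurd h'' ha, h'']
      have h : HasDerivAt _ _ y := ((((coth_hasDerivAt hsy).comp y (inner_hasDerivAt a y)).const_add
        1).pow 2).const_mul C
      rw [funext hF₂]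
      refine h.congr_deriv ?_
      simp only [Function.comp_def]
      push_cast
      ring
    have hDF₂ : deriv F₂ =ᶠ[nhds ξ] fun y : ℝ =>
        C * (2 * (1 + coth (a * y / 2)) *
          ((1 - coth (a * y / 2) ^ 2) * (a / 2))) := by
      filter_upwards [hev] with y hy
      exact (hD1' y hy).deriv
    set g : ℝ → ℝ := fun y : ℝ =>
        C * (2 * (1 + coth (a * y / 2)) *
          ((1 - coth (a * y / 2) ^ 2) * (a / 2))) with hg
    have hD2' : HasDerivAt g
        (C * (2 * ((1 - coth (a * ξ / 2) ^ 2) * (a / 2)) *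
            ((1 - coth (a * ξ / 2) ^ 2) * (a / 2))
          + 2 * (1 + coth (a * ξ / 2)) *
            ((-(2 * coth (a * ξ / 2) * ((1 - coth (a * ξ / 2) ^ 2) * (a / 2)))) * (a / 2)))) ξ := by
      have hc : ∀ y : ℝ, Real.sinh (a * y / 2) ≠ 0 →
          HasDerivAt (fun y : ℝ => coth (a * y / 2))
            ((1 - coth (a * y / 2) ^ 2) * (a / 2)) y := fun y hy =>
        by have := (coth_hasDerivAt hy).comp y (inner_hasDerivAt a y); exact this
      have ht := hc ξ hs
      have h1 : HasDerivAt (fun y : ℝ => 2 * (1 + coth (a * y / 2)))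
          (2 * ((1 - coth (a * ξ / 2) ^ 2) * (a / 2))) ξ := by
        simpa using (ht.const_add 1).const_mul 2
      have h2 : HasDerivAt (fun y : ℝ => (1 - coth (a * y / 2) ^ 2) * (a / 2))
          ((-(2 * coth (a * ξ / 2) * ((1 - coth (a * ξ / 2) ^ 2) * (a / 2)))) * (a / 2)) ξ := by
        have : HasDerivAt _ _ ξ := ((ht.pow 2).const_sub 1).mul_const (a / 2)
        refine this.congr_deriv ?_
        push_cast
        ring
      exact (h1.mul h2).const_mul C
    have key : deriv (deriv F₂) ξ = deriv g ξ := hDF₂.deriv_eq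
    rw [key, hD2'.deriv, hF₂ ξ, (hD1' ξ hξ).deriv, hC]
    field_simp
    ring
  · intro hbpos ξ hx
    have hx2 : 0 < a * ξ / 2 := by linarith
    set x := a * ξ / 2
    have hsp : 0 < Real.sinh x := Real.sinh_pos_iff.2 hx2
    have hcs : Real.sinh x < Real.cosh x := by
      nlinarith [Real.cosh_sq_sub_sinh_sq x, Real.cosh_pos x]
    have hcoth : 1 < coth x := by
      rw [coth, lt_div_iff₀ hsp]; linarith
    have htanh : Real.tanh x < 1 := by
      rw [Real.tanh_eq_sinh_div_cosh, div_lt_one (Real.cosh_pos x)]; exact hcs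
    have htanh' : -1 < Real.tanh x := by
      rw [Real.tanh_eq_sinh_div_cosh, lt_div_iff₀ (Real.cosh_pos x)]
      nlinarith [Real.cosh_sq_sub_sinh_sq x, Real.cosh_pos x]
    have hlt : 1 + Real.tanh x < 1 + coth x := by linarith
    have hCpos : 0 < C := by
      rw [hC]; positivity
    rw [hF₁ ξ, hF₂ ξ]
    have hnn : 0 ≤ 1 + Real.tanh x := by linarith
    exact mul_lt_mul_of_pos_left (by nlinarith) hCpos
end
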